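/- arXiv:2203.11528 — 2 statements merged into one kernel-verified Lean document; each statement's English description precedes it below -/
import Mathlib

section
/- Let X be a nonempty set and let h₁ : X → W₁ and h₂ : X → W₂ be functions. Then 𝒯_{h₁} = 𝒯_{h₂} if and only if there exists a function v : W₁ → W₂ such that h₂ = v ∘ h₁ and v is injective on the range of h₁ (in which case v restricts to a bijection from the range of h₁ onto the range of h₂); that is, h₂ equals h₁ composed with an invertible transformation between their ranges. -/
/-- For a function `h` on a set `X`, `𝒯 h` is the set of all transformations
`T : X → X` such that `h ∘ T = h`. -/
def invariantTransformations {X W : Type*} (h : X → W) : Set (X → X) :=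
  {T : X → X | h ∘ T = h}

/-- Lemma 1, second part: `𝒯 h₁ = 𝒯 h₂` iff `h₂` factors through `h₁` via a map `v`
that is injective on the range of `h₁` (in which case `v` restricts to a bijection
from the range of `h₁` onto the range of `h₂`). -/
theorem stmt_1 {X W₁ W₂ : Type*} [Nonempty X] (h₁ : X → W₁) (h₂ : X → W₂) :
    invariantTransformations h₁ = invariantTransformations h₂ ↔
      ∃ v : W₁ → W₂, h₂ = v ∘ h₁ ∧ Set.InjOn v (Set.range h₁) ∧
        Set.BijOn v (Set.range h₁) (Set.range h₂) := by
  classical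
  constructor
  · intro hEq
    -- fibers coincide
    have key : ∀ x y : X, h₁ x = h₁ y → h₂ x = h₂ y := by
      intro x y hxy
      have hT : (fun z => if z = x then y else z) ∈ invariantTransformations h₁ := by
        funext z
        simp only [Function.comp_apply]
        by_cases hz : z = x <;> simp [hz, hxy.symm]
      rw [hEq] at hT
      have := congrFun hT x
      simpa using this.symm
    have key' : ∀ x y : X, h₂ x = h₂ y → h₁ x = h₁ y := by
      intro x y hxy
      have hT : (fun z => if z = x then y else z) ∈ invariantTransformations h₂ := by
        funext z
        simp only [Function.comp_apply]
        by_cases hz : z = x <;> simp [hz, hxy.symm]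
      rw [← hEq] at hT
      have := congrFun hT x
      simpa using this.symm
    refine ⟨fun w => if hw : w ∈ Set.range h₁ then h₂ hw.choose
        else h₂ (Classical.arbitrary X), ?_, ?_, ?_, ?_, ?_⟩
    · funext x
      have hx : h₁ x ∈ Set.range h₁ := ⟨x, rfl⟩
      simp only [Function.comp_apply, dif_pos hx]
      exact (key _ x hx.choose_spec).symm
    · rintro _ ⟨a, rfl⟩ _ ⟨b, rfl⟩ hab
      have ha : h₁ a ∈ Set.range h₁ := ⟨a, rfl⟩
      have hb : h₁ b ∈ Set.range h₁ := ⟨b, rfl⟩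
      simp only [dif_pos ha, dif_pos hb] at hab
      have : h₂ a = h₂ b := by
        rw [key a _ ha.choose_spec.symm, key b _ hb.choose_spec.symm] at *
        exact hab
      exact key' a b this
    · rintro _ ⟨a, rfl⟩
      have ha : h₁ a ∈ Set.range h₁ := ⟨a, rfl⟩
      simp only [dif_pos ha]
      exact ⟨_, rfl⟩
    · rintro _ ⟨a, rfl⟩ _ ⟨b, rfl⟩ hab
      have ha : h₁ a ∈ Set.range h₁ := ⟨a, rfl⟩
      have hb : h₁ b ∈ Set.range h₁ := ⟨b, rfl⟩
      simp only [dif_pos ha, dif_pos hb] at hab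
      have : h₂ a = h₂ b := by
        rw [key a _ ha.choose_spec.symm, key b _ hb.choose_spec.symm] at *
        exact hab
      exact key' a b this
    · rintro _ ⟨a, rfl⟩
      have ha : h₁ a ∈ Set.range h₁ := ⟨a, rfl⟩
      refine ⟨h₁ a, ⟨a, rfl⟩, ?_⟩
      simp only [dif_pos ha]
      exact (key _ a ha.choose_spec)
  · rintro ⟨v, hfac, hinj, -⟩
    ext T
    simp only [invariantTransformations, Set.mem_setOf_eq]
    constructor
    · intro hT
      rw [hfac]
      funext x
      simp only [Function.comp_apply]
      exact congrArg v (congrFun hT x)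
    · intro hT
      funext x
      have h2 : h₂ (T x) = h₂ x := congrFun hT x
      rw [hfac] at h2
      exact hinj ⟨T x, rfl⟩ ⟨x, rfl⟩ h2
end

section
/- Let X be a nonempty set, let h₁ : X → W₁ and h₂ : X → W₂ be functions, and let I be a causal essential set for h₁. If every T ∈ I also satisfies h₂ ∘ T = h₂, then there exists a function v : W₁ → W₂ such that h₂ = v ∘ h₁. -/
/-- A family `I` of transformations `T : X → X` is a causal essential set for `h` if
`h ∘ T = h` for every `T ∈ I`, and for all `x₁, x₂` with `h x₁ = h x₂` there are finitely
many `T₁, …, T_K ∈ I` such that `(T₁ ∘ ⋯ ∘ T_K) x₁ = x₂`. -/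
def IsCausalEssentialSet {X W : Type*} (h : X → W) (I : Set (X → X)) : Prop :=
  (∀ T ∈ I, h ∘ T = h) ∧
    ∀ x₁ x₂ : X, h x₁ = h x₂ →
      ∃ l : List (X → X), (∀ T ∈ l, T ∈ I) ∧ l.foldr (· ∘ ·) id x₁ = x₂

theorem apply_foldr_comp_eq_of_forall_mem {X W : Type*} {h : X → W} {I : Set (X → X)}
    (hinv : ∀ T ∈ I, h ∘ T = h) {l : List (X → X)} (hl : ∀ T ∈ l, T ∈ I) (x : X) :
    h (l.foldr (· ∘ ·) id x) = h x := by
  induction l with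
  | nil => rfl
  | cons T l ih =>
    rw [List.foldr_cons, Function.comp_apply, ← Function.comp_apply (f := h),
      hinv T (hl T List.mem_cons_self), ih fun S hS => hl S (List.mem_cons_of_mem T hS)]

theorem IsCausalEssentialSet.factorsThrough {X W₁ W₂ : Type*} {h₁ : X → W₁} {h₂ : X → W₂}
    {I : Set (X → X)} (hI : IsCausalEssentialSet h₁ I) (hinv : ∀ T ∈ I, h₂ ∘ T = h₂) :
    h₂.FactorsThrough h₁ := by
  intro x₁ x₂ h
  obtain ⟨l, hl, rfl⟩ := hI.2 x₁ x₂ h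
  exact (apply_foldr_comp_eq_of_forall_mem hinv hl x₁).symm

/-- Lemma 2: if `I` is a causal essential set for `h₁` and every `T ∈ I` also leaves `h₂`
invariant, then `h₂` factors through `h₁`. -/
theorem stmt_2 {X W₁ W₂ : Type*} [Nonempty X] (h₁ : X → W₁) (h₂ : X → W₂)
    (I : Set (X → X)) (hI : IsCausalEssentialSet h₁ I)
    (hinv : ∀ T ∈ I, h₂ ∘ T = h₂) :
    ∃ v : W₁ → W₂, h₂ = v ∘ h₁ :=
  ⟨Function.extend h₁ h₂ fun _ => h₂ (Classical.arbitrary X),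
    ((hI.factorsThrough hinv).extend_comp _).symm⟩
end
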